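/- arXiv:2307.08158 — 3 statements merged into one kernel-verified Lean document; each statement's English description precedes it below -/
import Mathlib

section
/- Let X be uniformly distributed over a finite nonempty set A ⊆ {0,1}^{k₀}, and let Ψ : A → L be a function into a set L with |L| = 2^{ℓ₀}. Define S(X) := Ψ^{-1}(Ψ(X)). Then for every real number m, P(log₂ |S(X)| < log₂ |A| − ℓ₀ − m) ≤ 2^{−m}. -/
open scoped Classical

/-- Let `X` be uniformly distributed over a finite nonempty set
`A ⊆ {0,1}^{k₀}`, and let `Ψ : A → L` with `|L| = 2^{ℓ₀}`.  With
`S(X) := Ψ⁻¹(Ψ(X))`, for every real `m` we have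
`P(log₂ |S(X)| < log₂ |A| − ℓ₀ − m) ≤ 2^{−m}`. -/
theorem fiber_entropy_tail_bound (k₀ ℓ₀ : ℕ) (A : Finset (Fin k₀ → Bool)) (hA : A.Nonempty)
    (L : Type) [Fintype L] (hL : Fintype.card L = 2 ^ ℓ₀)
    (Ψ : (Fin k₀ → Bool) → L) (m : ℝ) :
    ((A.filter fun x =>
        Real.logb 2 (((A.filter fun y => Ψ y = Ψ x).card : ℝ)) <
          Real.logb 2 (A.card : ℝ) - (ℓ₀ : ℝ) - m).card : ℝ) / (A.card : ℝ) ≤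
      (2 : ℝ) ^ (-m) := by
  have hApos : (0:ℝ) < (A.card : ℝ) := by exact_mod_cast hA.card_pos
  set t : ℝ := (2:ℝ) ^ (Real.logb 2 (A.card:ℝ) - (ℓ₀:ℝ) - m) with ht
  have htpos : 0 < t := Real.rpow_pos_of_pos (by norm_num) _
  set B := A.filter fun x =>
      Real.logb 2 (((A.filter fun y => Ψ y = Ψ x).card : ℝ)) <
        Real.logb 2 (A.card : ℝ) - (ℓ₀ : ℝ) - m with hB
  have hfib : ∀ x ∈ B, ((A.filter fun y => Ψ y = Ψ x).card : ℝ) < t := by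
    intro x hx
    rw [hB, Finset.mem_filter] at hx
    have hxfib : x ∈ A.filter fun y => Ψ y = Ψ x := Finset.mem_filter.2 ⟨hx.1, rfl⟩
    have hpos : (0:ℝ) < ((A.filter fun y => Ψ y = Ψ x).card : ℝ) := by
      exact_mod_cast Finset.card_pos.2 ⟨x, hxfib⟩
    exact (Real.logb_lt_iff_lt_rpow (by norm_num) hpos).1 hx.2
  have hcard : (B.card : ℝ) ≤ (Fintype.card L : ℝ) * t := by
    have h1 : B.card = ∑ ℓ : L, (B.filter fun x => Ψ x = ℓ).card :=
      Finset.card_eq_sum_card_fiberwise (fun x _ => Finset.mem_univ _)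
    rw [h1]
    push_cast
    calc ∑ ℓ : L, ((B.filter fun x => Ψ x = ℓ).card : ℝ)
        ≤ ∑ _ℓ : L, t := by
          apply Finset.sum_le_sum
          intro ℓ _
          rcases (B.filter fun x => Ψ x = ℓ).eq_empty_or_nonempty with h | ⟨x, hx⟩
          · rw [h]; simpa using htpos.le
          · have hxB : x ∈ B := (Finset.mem_filter.1 hx).1
            have hΨ : Ψ x = ℓ := (Finset.mem_filter.1 hx).2
            have hsub : (B.filter fun z => Ψ z = ℓ) ⊆ A.filter fun y => Ψ y = Ψ x := by
              intro z hz
              rw [Finset.mem_filter] at hz ⊢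
              have hzA : z ∈ A := (Finset.mem_filter.1 (hB ▸ hz.1)).1
              exact ⟨hzA, by rw [hz.2, hΨ]⟩
            calc ((B.filter fun x => Ψ x = ℓ).card : ℝ)
                ≤ ((A.filter fun y => Ψ y = Ψ x).card : ℝ) := by
                  exact_mod_cast Finset.card_le_card hsub
              _ ≤ t := (hfib x hxB).le
      _ = (Fintype.card L : ℝ) * t := by
          simp [Finset.sum_const, Finset.card_univ, nsmul_eq_mul]
  have hkey : (Fintype.card L : ℝ) * t = (A.card : ℝ) * (2:ℝ) ^ (-m) := by
    rw [hL, ht]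
    push_cast
    rw [← Real.rpow_natCast (2:ℝ) ℓ₀, ← Real.rpow_add (by norm_num)]
    have : (ℓ₀:ℝ) + (Real.logb 2 (A.card:ℝ) - (ℓ₀:ℝ) - m)
        = Real.logb 2 (A.card:ℝ) + (-m) := by ring
    rw [this, Real.rpow_add (by norm_num),
      Real.rpow_logb (by norm_num) (by norm_num) hApos]
  rw [div_le_iff₀ hApos]
  calc (B.card : ℝ) ≤ (Fintype.card L : ℝ) * t := hcard
    _ = (2:ℝ) ^ (-m) * (A.card : ℝ) := by rw [hkey]; ring
end

section
/- Let Y = (Y₁,…,Yₙ) be a random n-bit string. For S ⊆ {1,…,n}, let ℬ(S) := |P(⊕_{i∈S} Y_i = 1) − 1/2| be the total variation distance between the bit ⊕_{i∈S} Y_i and a Bernoulli(1/2) random variable (with the convention that the XOR over the empty set is 0). If 𝒮 is a uniformly random subset of {1,…,n}, independent of Y, then E[ℬ(𝒮)] ≤ (1/2)·( Σ_{y ∈ {0,1}ⁿ} P(Y = y)² )^{1/2}. -/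
open Finset


/-- Let `Y` be a random `n`-bit string with distribution `μ`.
For `S ⊆ {1,…,n}` let `ℬ(S) := |P(⊕_{i∈S} Y_i = 1) − 1/2|` be the total variation
distance between the bit `⊕_{i∈S} Y_i` and a Bernoulli(1/2) random variable.
If `𝒮` is a uniformly random subset of `{1,…,n}` (independent of `Y`), then
`E[ℬ(𝒮)] ≤ (1/2) · (∑_y P(Y = y)²)^{1/2}`. -/
theorem expected_tv_distance_le (n : ℕ) (μ : (Fin n → Bool) → ℝ)
    (hμ0 : ∀ y, 0 ≤ μ y) (hμ1 : ∑ y, μ y = 1) :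
    (1 / 2 ^ n : ℝ) *
        ∑ S : Finset (Fin n),
          |(∑ y with (S.filter fun i => y i = true).card % 2 = 1, μ y) - 1 / 2| ≤
      (1 / 2 : ℝ) * Real.sqrt (∑ y, (μ y) ^ 2) := by
  classical
  set F : Finset (Fin n) → ℝ :=
    fun S => ∑ y, μ y * (-1 : ℝ) ^ ((S.filter fun i => y i = true).card) with hF
  -- Step 1: rewrite the TV distance via the Fourier coefficient
  have habs : ∀ S : Finset (Fin n),
      |(∑ y with (S.filter fun i => y i = true).card % 2 = 1, μ y) - 1 / 2| = |F S| / 2 := by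
    intro S
    set a : ℝ := ∑ y with (S.filter fun i => y i = true).card % 2 = 1, μ y with ha
    have h1 : F S = 1 - 2 * a := by
      have hsplit := Finset.sum_filter_add_sum_filter_not Finset.univ
        (fun y : Fin n → Bool => (S.filter fun i => y i = true).card % 2 = 1) μ
      rw [hμ1] at hsplit
      have h2 : F S = (∑ y with (S.filter fun i => y i = true).card % 2 = 1, (-(μ y)))
          + ∑ y with ¬ ((S.filter fun i => y i = true).card % 2 = 1), μ y := by
        simp only [hF]
        rw [← Finset.sum_filter_add_sum_filter_not Finset.univ
          (fun y : Fin n → Bool => (S.filter fun i => y i = true).card % 2 = 1)]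
        congr 1
        · apply Finset.sum_congr rfl
          intro y hy
          simp only [Finset.mem_filter] at hy
          rw [(Nat.odd_iff.2 hy.2).neg_one_pow]
          ring
        · apply Finset.sum_congr rfl
          intro y hy
          simp only [Finset.mem_filter] at hy
          rw [(Nat.even_iff.2 (Nat.mod_two_ne_one.mp hy.2)).neg_one_pow]
          ring
      rw [h2, Finset.sum_neg_distrib, ← ha]
      have : (∑ y with ¬ ((S.filter fun i => y i = true).card % 2 = 1), μ y) = 1 - a := by
        linarith [hsplit]
      rw [this]; ring
    rw [h1]
    have : a - 1 / 2 = -(1 - 2 * a) / 2 := by ring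
    rw [this, abs_div, abs_neg]
    norm_num
  -- Step 2: Parseval
  have hchi : ∀ (S : Finset (Fin n)) (y : Fin n → Bool),
      (-1 : ℝ) ^ ((S.filter fun i => y i = true).card)
        = ∏ i ∈ S, (if y i = true then (-1 : ℝ) else 1) := by
    intro S y
    rw [← Finset.prod_const, Finset.prod_filter]
  have hortho : ∀ y z : Fin n → Bool,
      (∑ S : Finset (Fin n), (∏ i ∈ S, (if y i = true then (-1 : ℝ) else 1))
          * ∏ i ∈ S, (if z i = true then (-1 : ℝ) else 1))
        = if y = z then (2 : ℝ) ^ n else 0 := by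
    intro y z
    have : ∀ S : Finset (Fin n),
        (∏ i ∈ S, (if y i = true then (-1 : ℝ) else 1))
          * ∏ i ∈ S, (if z i = true then (-1 : ℝ) else 1)
        = ∏ i ∈ S, ((if y i = true then (-1 : ℝ) else 1) * (if z i = true then (-1 : ℝ) else 1)) := by
      intro S; rw [Finset.prod_mul_distrib]
    simp only [this]
    have hps : (Finset.univ : Finset (Finset (Fin n))) = (Finset.univ : Finset (Fin n)).powerset :=
      (Finset.powerset_univ).symm
    rw [hps]
    have := Finset.prod_add
      (fun i : Fin n => (if y i = true then (-1 : ℝ) else 1) * (if z i = true then (-1 : ℝ) else 1))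
      (fun _ : Fin n => (1 : ℝ)) Finset.univ
    simp only [Finset.prod_const_one, mul_one] at this
    rw [← this]
    have hfac : ∀ i : Fin n,
        ((if y i = true then (-1 : ℝ) else 1) * (if z i = true then (-1 : ℝ) else 1) + 1)
          = if y i = z i then 2 else 0 := by
      intro i
      by_cases hy : y i = true <;> by_cases hz : z i = true <;>
        simp [hy, hz] <;> norm_num
    simp only [hfac]
    by_cases hyz : y = z
    · subst hyz
      simp [Finset.prod_const]
    · have : ∃ i, y i ≠ z i := by
        by_contra h
        push_neg at h
        exact hyz (funext h)
      obtain ⟨i, hi⟩ := this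
      rw [if_neg hyz]
      exact Finset.prod_eq_zero (Finset.mem_univ i) (by simp [hi])
  have hpar : ∑ S : Finset (Fin n), F S ^ 2 = 2 ^ n * ∑ y, μ y ^ 2 := by
    have hFsq : ∀ S : Finset (Fin n), F S ^ 2
        = ∑ y, ∑ z, (μ y * μ z) *
            ((∏ i ∈ S, (if y i = true then (-1 : ℝ) else 1))
              * ∏ i ∈ S, (if z i = true then (-1 : ℝ) else 1)) := by
      intro S
      rw [sq, hF]
      simp only [hchi]
      rw [Finset.sum_mul_sum]
      apply Finset.sum_congr rfl; intro y _
      apply Finset.sum_congr rfl; intro z _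
      ring
    simp only [hFsq]
    rw [Finset.sum_comm]
    have : ∀ y : Fin n → Bool,
        (∑ S : Finset (Fin n), ∑ z, (μ y * μ z) *
            ((∏ i ∈ S, (if y i = true then (-1 : ℝ) else 1))
              * ∏ i ∈ S, (if z i = true then (-1 : ℝ) else 1)))
        = 2 ^ n * μ y ^ 2 := by
      intro y
      rw [Finset.sum_comm]
      have : ∀ z : Fin n → Bool,
          (∑ S : Finset (Fin n), (μ y * μ z) *
              ((∏ i ∈ S, (if y i = true then (-1 : ℝ) else 1))
                * ∏ i ∈ S, (if z i = true then (-1 : ℝ) else 1)))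
          = (μ y * μ z) * (if y = z then (2 : ℝ) ^ n else 0) := by
        intro z
        rw [← Finset.mul_sum, hortho]
      simp only [this]
      simp only [mul_ite, mul_zero, Finset.sum_ite_eq, Finset.mem_univ, if_true]
      ring
    simp only [this]
    rw [Finset.mul_sum]
  -- Step 3: Cauchy–Schwarz
  have hcard : (Finset.univ : Finset (Finset (Fin n))).card = 2 ^ n := by
    simp [Finset.card_univ]
  have hcs : (∑ S : Finset (Fin n), |F S|) ^ 2
      ≤ (2 ^ n : ℝ) * ∑ S : Finset (Fin n), F S ^ 2 := by
    have := sq_sum_le_card_mul_sum_sq (s := (Finset.univ : Finset (Finset (Fin n))))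
      (f := fun S => |F S|)
    simp only [sq_abs, hcard] at this
    exact_mod_cast this
  have hsum_nonneg : (0 : ℝ) ≤ ∑ S : Finset (Fin n), |F S| :=
    Finset.sum_nonneg fun S _ => abs_nonneg _
  have hμsq : (0 : ℝ) ≤ ∑ y, μ y ^ 2 := Finset.sum_nonneg fun y _ => sq_nonneg _
  have hbound : (∑ S : Finset (Fin n), |F S|) ≤ 2 ^ n * Real.sqrt (∑ y, μ y ^ 2) := by
    have h2 : (∑ S : Finset (Fin n), |F S|) ^ 2 ≤ ((2:ℝ) ^ n) ^ 2 * ∑ y, μ y ^ 2 := by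
      rw [hpar] at hcs
      calc (∑ S : Finset (Fin n), |F S|) ^ 2 ≤ (2 ^ n : ℝ) * (2 ^ n * ∑ y, μ y ^ 2) := hcs
        _ = ((2:ℝ) ^ n) ^ 2 * ∑ y, μ y ^ 2 := by ring
    calc (∑ S : Finset (Fin n), |F S|)
        = Real.sqrt ((∑ S : Finset (Fin n), |F S|) ^ 2) := (Real.sqrt_sq hsum_nonneg).symm
      _ ≤ Real.sqrt (((2:ℝ) ^ n) ^ 2 * ∑ y, μ y ^ 2) := Real.sqrt_le_sqrt h2
      _ = 2 ^ n * Real.sqrt (∑ y, μ y ^ 2) := by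
          rw [Real.sqrt_mul (sq_nonneg _), Real.sqrt_sq (by positivity : (0:ℝ) ≤ (2:ℝ) ^ n)]
  calc (1 / 2 ^ n : ℝ) *
        ∑ S : Finset (Fin n),
          |(∑ y with (S.filter fun i => y i = true).card % 2 = 1, μ y) - 1 / 2|
      = (1 / 2 ^ n : ℝ) * ∑ S : Finset (Fin n), |F S| / 2 := by
        congr 1; exact Finset.sum_congr rfl fun S _ => habs S
    _ = (1 / 2 ^ n : ℝ) * (1 / 2) * ∑ S : Finset (Fin n), |F S| := by
        rw [← Finset.sum_div]; ring
    _ ≤ (1 / 2 ^ n : ℝ) * (1 / 2) * (2 ^ n * Real.sqrt (∑ y, μ y ^ 2)) := by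
        apply mul_le_mul_of_nonneg_left hbound
        positivity
    _ = (1 / 2 : ℝ) * Real.sqrt (∑ y, (μ y) ^ 2) := by
        field_simp
end

section
/- Let S ⊆ {0,1}^κ satisfy log₂ |S| ≥ κ − α, and let K be a uniform random element of S. Define g(q) := P(K[q] = 0)² + P(K[q] = 1)² for q ∈ {1,…,κ}. Suppose α ≥ 0, k ≥ 1, and α + k ≤ κ. If P₁ is uniformly distributed on {1,…,κ}, independent of K, then E[g(P₁)] ≤ h^{-1}(1 − (α + k)/κ). -/
/-- The binary entropy function (base 2), with `binEnt 0 = binEnt 1 = 0`. -/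
noncomputable def binEnt (p : ℝ) : ℝ :=
  p * Real.logb 2 p⁻¹ + (1 - p) * Real.logb 2 (1 - p)⁻¹

/-- The inverse of the restriction of the binary entropy function to `[1/2, 1]`. -/
noncomputable def binEntInv : ℝ → ℝ :=
  Function.invFunOn binEnt (Set.Icc (1 / 2 : ℝ) 1)

lemma binEnt_eq (p : ℝ) : binEnt p = Real.binEntropy p / Real.log 2 := by
  simp only [binEnt, Real.binEntropy, Real.logb, Real.log_inv, add_div]
  ring

lemma log2_pos : (0:ℝ) < Real.log 2 := Real.log_pos (by norm_num)

lemma binEnt_concave : ConcaveOn ℝ (Set.Icc (0:ℝ) 1) binEnt := by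
  have h := Real.strictConcave_binEntropy.concaveOn
  have h2 : (0:ℝ) ≤ (Real.log 2)⁻¹ := by positivity
  have h3 := h.smul h2
  have hfun : binEnt = fun x => (Real.log 2)⁻¹ • Real.binEntropy x := by
    funext p
    rw [binEnt_eq]
    simp [smul_eq_mul, div_eq_inv_mul]
  rw [hfun]
  exact h3

lemma mem_half_one {x : ℝ} (h : x ∈ Set.Icc (1/2:ℝ) 1) : x ∈ Set.Icc (2⁻¹:ℝ) 1 := by
  rwa [show (2⁻¹:ℝ) = 1/2 by norm_num]

lemma binEnt_strictAntiOn : StrictAntiOn binEnt (Set.Icc (1/2:ℝ) 1) := by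
  intro x hx y hy hxy
  rw [binEnt_eq, binEnt_eq]
  exact div_lt_div_of_pos_right
    (Real.binEntropy_strictAntiOn (mem_half_one hx) (mem_half_one hy) hxy) log2_pos

lemma binEnt_antitoneOn : AntitoneOn binEnt (Set.Icc (1/2:ℝ) 1) :=
  binEnt_strictAntiOn.antitoneOn

lemma binEnt_half : binEnt (1/2) = 1 := by
  rw [binEnt_eq, show (1/2:ℝ) = 2⁻¹ by norm_num, Real.binEntropy_two_inv,
    div_self log2_pos.ne']

lemma binEnt_one : binEnt 1 = 0 := by rw [binEnt_eq, Real.binEntropy_one, zero_div]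

lemma binEnt_zero : binEnt 0 = 0 := by rw [binEnt_eq, Real.binEntropy_zero, zero_div]

lemma binEnt_one_sub (p : ℝ) : binEnt (1 - p) = binEnt p := by
  rw [binEnt_eq, binEnt_eq, Real.binEntropy_one_sub]

lemma binEnt_continuous : Continuous binEnt := by
  simp only [funext binEnt_eq]
  exact Real.binEntropy_continuous.div_const _

lemma chain_identity (s0 s1 : ℝ) (h0 : 0 ≤ s0) (h1 : 0 ≤ s1) (hs : 0 < s0 + s1) :
    Real.logb 2 (s0 + s1) =
      binEnt (s1 / (s0 + s1)) + (s0 / (s0 + s1)) * Real.logb 2 s0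
        + (s1 / (s0 + s1)) * Real.logb 2 s1 := by
  rcases h0.eq_or_lt with rfl | h0'
  · simp only [zero_add] at hs ⊢
    rw [div_self hs.ne', binEnt_one]
    simp
  rcases h1.eq_or_lt with rfl | h1'
  · simp only [add_zero] at hs ⊢
    rw [zero_div, binEnt_zero, div_self hs.ne']
    simp
  have hssum : (0:ℝ) < s0 + s1 := hs
  have e1 : (s1 / (s0 + s1))⁻¹ = (s0 + s1) / s1 := by rw [inv_div]
  have e2 : 1 - s1 / (s0 + s1) = s0 / (s0 + s1) := by field_simp; ring
  rw [binEnt, e1, e2, inv_div,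
    Real.logb_div hssum.ne' h1'.ne', Real.logb_div hssum.ne' h0'.ne']
  field_simp
  ring

lemma concave_step (s0 s1 c0 c1 : ℝ) (h0 : 0 ≤ s0) (h1 : 0 ≤ s1)
    (hc0 : 0 ≤ c0) (hc1 : 0 ≤ c1) (hcs0 : c0 ≤ s0) (hcs1 : c1 ≤ s1) (hs : 0 < s0 + s1) :
    (s0 / (s0 + s1)) * binEnt (c0 / s0) + (s1 / (s0 + s1)) * binEnt (c1 / s1) ≤
      binEnt ((c0 + c1) / (s0 + s1)) := by
  have hx0 : c0 / s0 ∈ Set.Icc (0:ℝ) 1 := by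
    rcases h0.eq_or_lt with rfl | h0'
    · have : c0 = 0 := le_antisymm hcs0 hc0
      simp [this]
    · exact ⟨div_nonneg hc0 h0, (div_le_one h0').mpr hcs0⟩
  have hx1 : c1 / s1 ∈ Set.Icc (0:ℝ) 1 := by
    rcases h1.eq_or_lt with rfl | h1'
    · have : c1 = 0 := le_antisymm hcs1 hc1
      simp [this]
    · exact ⟨div_nonneg hc1 h1, (div_le_one h1').mpr hcs1⟩
  have ha : (0:ℝ) ≤ s0 / (s0 + s1) := div_nonneg h0 hs.le
  have hb : (0:ℝ) ≤ s1 / (s0 + s1) := div_nonneg h1 hs.le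
  have hab : s0 / (s0 + s1) + s1 / (s0 + s1) = 1 := by field_simp
  have key := binEnt_concave.2 hx0 hx1 ha hb hab
  simp only [smul_eq_mul] at key
  have e0 : s0 / (s0 + s1) * (c0 / s0) = c0 / (s0 + s1) := by
    rcases h0.eq_or_lt with rfl | h0'
    · have : c0 = 0 := le_antisymm hcs0 hc0
      simp [this]
    · field_simp
  have e1 : s1 / (s0 + s1) * (c1 / s1) = c1 / (s0 + s1) := by
    rcases h1.eq_or_lt with rfl | h1'
    · have : c1 = 0 := le_antisymm hcs1 hc1
      simp [this]
    · field_simp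
  rw [e0, e1, ← add_div] at key
  exact key

lemma bool_partition {γ : Type*} (T : Finset γ) (f : γ → Bool) :
    (T.filter fun x => f x = false).card + (T.filter fun x => f x = true).card = T.card := by
  classical
  rw [show (T.filter fun x => f x = true) = T.filter fun x => ¬ (f x = false) by
    apply Finset.filter_congr; intro x _; simp]
  exact Finset.card_filter_add_card_filter_not _

lemma subadd {ι : Type*} [DecidableEq ι] (A : Finset ι) (S : Finset (ι → Bool)) (hS : S.Nonempty)
    (hdet : ∀ f ∈ S, ∀ g ∈ S, (∀ j ∈ A, f j = g j) → f = g) :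
    Real.logb 2 (S.card : ℝ) ≤
      ∑ j ∈ A, binEnt (((S.filter fun K => K j = true).card : ℝ) / (S.card : ℝ)) := by
  classical
  induction A using Finset.induction_on generalizing S with
  | empty =>
    obtain ⟨f, hf⟩ := hS
    have : S = {f} := by
      apply Finset.eq_singleton_iff_unique_mem.mpr
      exact ⟨hf, fun g hg => hdet g hg f hf (by simp)⟩
    simp [this]
  | @insert i A hiA ih =>
    set S0 := S.filter (fun K => K i = false) with hS0
    set S1 := S.filter (fun K => K i = true) with hS1
    have hcard : S0.card + S1.card = S.card := bool_partition S (fun K => K i)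
    have hspos : 0 < (S.card : ℝ) := by exact_mod_cast hS.card_pos
    -- determinedness for the halves
    have hdet' : ∀ b : Bool, ∀ f ∈ S.filter (fun K => K i = b), ∀ g ∈ S.filter (fun K => K i = b),
        (∀ j ∈ A, f j = g j) → f = g := by
      intro b f hf g hg hagree
      rw [Finset.mem_filter] at hf hg
      refine hdet f hf.1 g hg.1 ?_
      intro j hj
      rcases Finset.mem_insert.mp hj with rfl | hj'
      · rw [hf.2, hg.2]
      · exact hagree j hj'
    -- coordinate count decomposition
    have hcj : ∀ j : ι, (S.filter fun K => K j = true).card =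
        (S0.filter fun K => K j = true).card + (S1.filter fun K => K j = true).card := by
      intro j
      have := bool_partition (S.filter fun K => K j = true) (fun K => K i)
      rw [Finset.filter_filter, Finset.filter_filter] at this
      rw [hS0, hS1, Finset.filter_filter, Finset.filter_filter]
      rw [← this]
      congr 1
      · exact congrArg Finset.card (Finset.filter_congr (fun x _ => by tauto))
      · exact congrArg Finset.card (Finset.filter_congr (fun x _ => by tauto))
    -- abbreviations
    set s : ℝ := (S.card : ℝ)
    set s0 : ℝ := (S0.card : ℝ)
    set s1 : ℝ := (S1.card : ℝ)
    have hs01 : s0 + s1 = s := by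
      show ((S0.card : ℝ) + (S1.card : ℝ) = (S.card : ℝ))
      exact_mod_cast hcard
    have h0 : (0:ℝ) ≤ s0 := Nat.cast_nonneg _
    have h1 : (0:ℝ) ≤ s1 := Nat.cast_nonneg _
    have hspos' : (0:ℝ) < s0 + s1 := by rw [hs01]; exact hspos
    have key1 : ∀ b : Bool,
        ((S.filter (fun K => K i = b)).card : ℝ) / s * Real.logb 2 ((S.filter (fun K => K i = b)).card : ℝ) ≤
        ((S.filter (fun K => K i = b)).card : ℝ) / s *
          ∑ j ∈ A, binEnt ((((S.filter (fun K => K i = b)).filter fun K => K j = true).card : ℝ) /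
            ((S.filter (fun K => K i = b)).card : ℝ)) := by
      intro b
      rcases (S.filter (fun K => K i = b)).eq_empty_or_nonempty with he | hne
      · simp [he]
      · exact mul_le_mul_of_nonneg_left (ih _ hne (hdet' b))
          (div_nonneg (Nat.cast_nonneg _) hspos.le)
    -- assemble
    rw [Finset.sum_insert hiA]
    have step1 : Real.logb 2 s = binEnt (s1 / s) + (s0 / s) * Real.logb 2 s0
        + (s1 / s) * Real.logb 2 s1 := by
      rw [← hs01]
      exact chain_identity s0 s1 h0 h1 hspos'
    rw [step1]
    have step2 : (s0 / s) * Real.logb 2 s0 + (s1 / s) * Real.logb 2 s1 ≤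
        ∑ j ∈ A, binEnt (((S.filter fun K => K j = true).card : ℝ) / s) := by
      calc (s0 / s) * Real.logb 2 s0 + (s1 / s) * Real.logb 2 s1
          ≤ (s0 / s) * ∑ j ∈ A, binEnt (((S0.filter fun K => K j = true).card : ℝ) / s0)
            + (s1 / s) * ∑ j ∈ A, binEnt (((S1.filter fun K => K j = true).card : ℝ) / s1) :=
            add_le_add (key1 false) (key1 true)
        _ = ∑ j ∈ A, ((s0 / s) * binEnt (((S0.filter fun K => K j = true).card : ℝ) / s0)
            + (s1 / s) * binEnt (((S1.filter fun K => K j = true).card : ℝ) / s1)) := by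
            rw [Finset.mul_sum, Finset.mul_sum, ← Finset.sum_add_distrib]
        _ ≤ ∑ j ∈ A, binEnt (((S.filter fun K => K j = true).card : ℝ) / s) := by
            apply Finset.sum_le_sum
            intro j _
            have hc0 : (0:ℝ) ≤ ((S0.filter fun K => K j = true).card : ℝ) := Nat.cast_nonneg _
            have hc1 : (0:ℝ) ≤ ((S1.filter fun K => K j = true).card : ℝ) := Nat.cast_nonneg _
            have hcs0 : ((S0.filter fun K => K j = true).card : ℝ) ≤ s0 := by
              show ((S0.filter fun K => K j = true).card : ℝ) ≤ ((S0.card : ℝ))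
              exact_mod_cast Finset.card_le_card (Finset.filter_subset _ _)
            have hcs1 : ((S1.filter fun K => K j = true).card : ℝ) ≤ s1 := by
              show ((S1.filter fun K => K j = true).card : ℝ) ≤ ((S1.card : ℝ))
              exact_mod_cast Finset.card_le_card (Finset.filter_subset _ _)
            have := concave_step s0 s1 _ _ h0 h1 hc0 hc1 hcs0 hcs1 hspos'
            rw [hs01] at this
            rw [hcj j, Nat.cast_add]
            exact this
    have hsi : ((S.filter fun K => K i = true).card : ℝ) / s = s1 / s := rfl
    rw [hsi]
    linarith

lemma g_mem {p : ℝ} (h0 : 0 ≤ p) (h1 : p ≤ 1) :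
    (1 - p)^2 + p^2 ∈ Set.Icc (1/2 : ℝ) 1 := by
  constructor <;> nlinarith [sq_nonneg (2*p - 1), sq_nonneg p]

lemma binEnt_le_g {p : ℝ} (h0 : 0 ≤ p) (h1 : p ≤ 1) :
    binEnt p ≤ binEnt ((1 - p)^2 + p^2) := by
  rcases le_total (1/2 : ℝ) p with hp | hp
  · exact binEnt_antitoneOn (g_mem h0 h1) ⟨hp, h1⟩ (by nlinarith)
  · rw [← binEnt_one_sub p]
    exact binEnt_antitoneOn (g_mem h0 h1) ⟨by linarith, by linarith⟩ (by nlinarith)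


/-- **base case.** Let `K` be uniform over `S ⊆ {0,1}^κ` with
`log₂ |S| ≥ κ − α`, and set `g(q) := P(K[q] = 0)² + P(K[q] = 1)²`.  If `α ≥ 0`,
`k ≥ 1` and `α + k ≤ κ`, then for a uniform random probe `P₁`,
`E[g(P₁)] ≤ h⁻¹(1 − (α + k)/κ)`. -/
theorem expected_g_one_le (κ k : ℕ) (α : ℝ) (S : Finset (Fin κ → Bool)) (hS : S.Nonempty)
    (hent : (κ : ℝ) - α ≤ Real.logb 2 (S.card : ℝ))
    (hα : 0 ≤ α) (hk : 1 ≤ k) (hκ : α + (k : ℝ) ≤ (κ : ℝ)) :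
    (1 / (κ : ℝ)) *
        ∑ j : Fin κ,
          ((((S.filter fun K => K j = false).card : ℝ) / (S.card : ℝ)) ^ 2 +
            (((S.filter fun K => K j = true).card : ℝ) / (S.card : ℝ)) ^ 2) ≤
      binEntInv (1 - (α + (k : ℝ)) / (κ : ℝ)) := by
  classical
  have hk1 : (1:ℝ) ≤ (k:ℝ) := by exact_mod_cast hk
  have hκpos : (0:ℝ) < (κ:ℝ) := lt_of_lt_of_le (by linarith) hκ
  have hspos : (0:ℝ) < (S.card : ℝ) := by exact_mod_cast hS.card_pos
  set p : Fin κ → ℝ := fun j => ((S.filter fun K => K j = true).card : ℝ) / (S.card : ℝ)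
    with hp
  have hp0 : ∀ j, 0 ≤ p j := fun j => div_nonneg (Nat.cast_nonneg _) hspos.le
  have hp1 : ∀ j, p j ≤ 1 := fun j => by
    apply (div_le_one hspos).mpr
    exact_mod_cast Finset.card_le_card (Finset.filter_subset _ _)
  have hfalse : ∀ j : Fin κ,
      ((S.filter fun K => K j = false).card : ℝ) / (S.card : ℝ) = 1 - p j := by
    intro j
    have := bool_partition S (fun K => K j)
    have h2 : ((S.filter fun K => K j = false).card : ℝ)
        = (S.card : ℝ) - ((S.filter fun K => K j = true).card : ℝ) := by
      have : ((S.filter fun K => K j = false).card : ℝ)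
          + ((S.filter fun K => K j = true).card : ℝ) = (S.card : ℝ) := by exact_mod_cast this
      linarith
    rw [h2, hp]
    field_simp
  -- rewrite the sum
  have hsum : (1 / (κ : ℝ)) * ∑ j : Fin κ,
      ((((S.filter fun K => K j = false).card : ℝ) / (S.card : ℝ)) ^ 2 +
        (((S.filter fun K => K j = true).card : ℝ) / (S.card : ℝ)) ^ 2)
      = ∑ j : Fin κ, (1 / (κ : ℝ)) * ((1 - p j)^2 + (p j)^2) := by
    rw [Finset.mul_sum]
    refine Finset.sum_congr rfl fun j _ => ?_
    rw [hfalse j]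
  rw [hsum]
  set E : ℝ := ∑ j : Fin κ, (1 / (κ : ℝ)) * ((1 - p j)^2 + (p j)^2) with hE
  -- E ∈ [1/2, 1]
  have hcardκ : (Finset.univ : Finset (Fin κ)).card = κ := by simp
  have hwsum : ∑ _j : Fin κ, (1 / (κ : ℝ)) = 1 := by
    rw [Finset.sum_const, hcardκ, nsmul_eq_mul]
    field_simp
  have hEmem : E ∈ Set.Icc (1/2 : ℝ) 1 := by
    constructor
    · calc (1/2 : ℝ) = ∑ _j : Fin κ, (1 / (κ:ℝ)) * (1/2) := by
            rw [← Finset.sum_mul, hwsum, one_mul]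
        _ ≤ E := Finset.sum_le_sum fun j _ =>
            mul_le_mul_of_nonneg_left (g_mem (hp0 j) (hp1 j)).1 (by positivity)
    · calc E ≤ ∑ _j : Fin κ, (1 / (κ:ℝ)) * 1 := Finset.sum_le_sum fun j _ =>
            mul_le_mul_of_nonneg_left (g_mem (hp0 j) (hp1 j)).2 (by positivity)
        _ = 1 := by rw [← Finset.sum_mul, hwsum, one_mul]
  -- Jensen
  have hJensen : ∑ j : Fin κ, (1 / (κ:ℝ)) • binEnt ((1 - p j)^2 + (p j)^2) ≤ binEnt E := by
    have := binEnt_concave.le_map_sum (t := Finset.univ)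
      (w := fun _ : Fin κ => 1 / (κ:ℝ)) (p := fun j => (1 - p j)^2 + (p j)^2)
      (fun j _ => by positivity) hwsum
      (fun j _ => Set.Icc_subset_Icc (by norm_num) le_rfl (g_mem (hp0 j) (hp1 j)))
    simpa [smul_eq_mul, hE] using this
  -- lower bound on binEnt E
  set c : ℝ := 1 - (α + (k:ℝ)) / (κ:ℝ) with hc
  have hbE : c ≤ binEnt E := by
    have h1 : Real.logb 2 (S.card : ℝ) ≤ ∑ j : Fin κ, binEnt (p j) := by
      have := subadd Finset.univ S hS (fun f _ g _ hfg => funext fun j => hfg j (by simp))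
      simpa using this
    have h2 : ∑ j : Fin κ, binEnt (p j) ≤ ∑ j : Fin κ, binEnt ((1 - p j)^2 + (p j)^2) :=
      Finset.sum_le_sum fun j _ => binEnt_le_g (hp0 j) (hp1 j)
    have h3 : (1/(κ:ℝ)) * ((κ:ℝ) - α) ≤
        (1/(κ:ℝ)) * ∑ j : Fin κ, binEnt ((1 - p j)^2 + (p j)^2) :=
      mul_le_mul_of_nonneg_left (le_trans (le_trans hent h1) h2) (by positivity)
    have h4 : (1/(κ:ℝ)) * ∑ j : Fin κ, binEnt ((1 - p j)^2 + (p j)^2)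
        = ∑ j : Fin κ, (1 / (κ:ℝ)) • binEnt ((1 - p j)^2 + (p j)^2) := by
      rw [Finset.mul_sum]; simp [smul_eq_mul]
    have h5 : c ≤ (1/(κ:ℝ)) * ((κ:ℝ) - α) := by
      rw [hc]
      rw [mul_comm, mul_one_div, sub_div, div_self hκpos.ne']
      have : α / (κ:ℝ) ≤ (α + (k:ℝ)) / (κ:ℝ) :=
        div_le_div_of_nonneg_right (by linarith) hκpos.le
      linarith
    calc c ≤ (1/(κ:ℝ)) * ((κ:ℝ) - α) := h5
      _ ≤ _ := h3
      _ = _ := h4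
      _ ≤ binEnt E := hJensen
  -- properties of binEntInv c
  have hcmem : c ∈ Set.Icc (0:ℝ) 1 := by
    constructor
    · rw [hc]
      have : (α + (k:ℝ)) / (κ:ℝ) ≤ 1 := (div_le_one hκpos).mpr hκ
      linarith
    · rw [hc]
      have : 0 ≤ (α + (k:ℝ)) / (κ:ℝ) := by positivity
      linarith
  have hex : ∃ a ∈ Set.Icc (1/2 : ℝ) 1, binEnt a = c := by
    have hsub := intermediate_value_Icc' (by norm_num : (1/2:ℝ) ≤ 1)
      binEnt_continuous.continuousOn
    have : c ∈ Set.Icc (binEnt 1) (binEnt (1/2)) := by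
      rw [binEnt_one, binEnt_half]; exact hcmem
    obtain ⟨a, ha, hfa⟩ := hsub this
    exact ⟨a, ha, hfa⟩
  have hmem : binEntInv c ∈ Set.Icc (1/2 : ℝ) 1 := Function.invFunOn_mem hex
  have heq : binEnt (binEntInv c) = c := Function.invFunOn_eq hex
  by_contra hcon
  push_neg at hcon
  have := binEnt_strictAntiOn hmem hEmem hcon
  rw [heq] at this
  exact absurd hbE (not_le.mpr this)
end
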